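/- arXiv:1509.04175 — 2 statements merged into one kernel-verified Lean document; each statement's English description precedes it below -/
import Mathlib

section
/- Let (M_n) be a uniformly bounded sequence of bounded operators on a Hilbert space H converging strongly to M, with subspaces L_n invariant under M_n such that for any sequence g_n ∈ L_n with ‖g_n‖ ≤ 1 the sequence (M_n g_n) is relatively compact. If g_n ∈ L_n are unit eigenvectors with M_n g_n = λ_n g_n and λ_n → λ₀ ≠ 0, then some subsequence of (g_n) converges to a unit vector g with M g = λ₀ g; in particular λ₀ is an eigenvalue of M. -/
open Filter

/-- Let `(M_n)` be a uniformly bounded sequence of bounded operators on a Hilbert space `H`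
converging strongly to `M`, with subspaces `L_n` invariant under `M_n` such that for any
sequence `g_n ∈ L_n` with `‖g_n‖ ≤ 1` the sequence `(M_n g_n)` has a convergent subsequence
(relative compactness).  If `g_n ∈ L_n` are unit eigenvectors with `M_n g_n = λ_n g_n` and
`λ_n → λ₀ ≠ 0`, then some subsequence of `(g_n)` converges to a unit vector `g` with
`M g = λ₀ g`; in particular `λ₀` is an eigenvalue of `M`. -/
theorem eigenvalue_cluster_point
    {H : Type*} [NormedAddCommGroup H] [InnerProductSpace ℂ H] [CompleteSpace H]
    (M : ℕ → H →L[ℂ] H) (Mlim : H →L[ℂ] H) (L : ℕ → Submodule ℂ H)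
    (hbound : ∃ C : ℝ, ∀ n, ‖M n‖ ≤ C)
    (hstrong : ∀ x : H, Tendsto (fun n => M n x) atTop (nhds (Mlim x)))
    (hL_inv : ∀ n, ∀ x ∈ L n, M n x ∈ L n)
    (hcompact : ∀ g : ℕ → H, (∀ n, g n ∈ L n) → (∀ n, ‖g n‖ ≤ 1) →
      ∃ φ : ℕ → ℕ, StrictMono φ ∧ ∃ y : H,
        Tendsto (fun k => M (φ k) (g (φ k))) atTop (nhds y))
    (g : ℕ → H) (hg_mem : ∀ n, g n ∈ L n) (hg_norm : ∀ n, ‖g n‖ = 1)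
    (lam : ℕ → ℂ) (heig : ∀ n, M n (g n) = lam n • g n)
    (lam₀ : ℂ) (hlam : Tendsto lam atTop (nhds lam₀)) (hlam₀ : lam₀ ≠ 0) :
    ∃ φ : ℕ → ℕ, StrictMono φ ∧ ∃ glim : H, ‖glim‖ = 1 ∧
      Tendsto (fun k => g (φ k)) atTop (nhds glim) ∧ Mlim glim = lam₀ • glim := by
  obtain ⟨C, hC⟩ := hbound
  obtain ⟨φ, hφ, y, hy⟩ := hcompact g hg_mem (fun n => (hg_norm n).le)
  have hlamφ : Tendsto (fun k => lam (φ k)) atTop (nhds lam₀) :=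
    hlam.comp hφ.tendsto_atTop
  have hy' : Tendsto (fun k => lam (φ k) • g (φ k)) atTop (nhds y) := by
    simpa only [heig] using hy
  set glim : H := lam₀⁻¹ • y with hglim_def
  have hg_tends : Tendsto (fun k => g (φ k)) atTop (nhds glim) := by
    have h1 : Tendsto (fun k => (lam (φ k))⁻¹ • (lam (φ k) • g (φ k))) atTop
        (nhds (lam₀⁻¹ • y)) := (hlamφ.inv₀ hlam₀).smul hy'
    refine h1.congr' ?_
    have hne : ∀ᶠ k in atTop, lam (φ k) ≠ 0 := by
      have : ∀ᶠ k in atTop, lam (φ k) ∈ {z : ℂ | z ≠ 0} :=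
        hlamφ (IsOpen.mem_nhds isOpen_ne hlam₀)
      exact this
    filter_upwards [hne] with k hk
    rw [smul_smul, inv_mul_cancel₀ hk, one_smul]
  have hnorm : ‖glim‖ = 1 := by
    have h1 : Tendsto (fun k => ‖g (φ k)‖) atTop (nhds ‖glim‖) :=
      (continuous_norm.tendsto _).comp hg_tends
    have h2 : Tendsto (fun k => ‖g (φ k)‖) atTop (nhds 1) := by
      simpa only [hg_norm] using tendsto_const_nhds
    exact tendsto_nhds_unique h1 h2
  have hylim : y = lam₀ • glim := by
    rw [hglim_def, smul_smul, mul_inv_cancel₀ hlam₀, one_smul]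
  -- show M (φ k) (g (φ k)) → Mlim glim
  have hdiff : Tendsto (fun k => M (φ k) (g (φ k)) - M (φ k) glim) atTop (nhds 0) := by
    have hb : ∀ k, ‖M (φ k) (g (φ k)) - M (φ k) glim‖ ≤ max C 0 * ‖g (φ k) - glim‖ := by
      intro k
      rw [← map_sub]
      calc ‖M (φ k) (g (φ k) - glim)‖ ≤ ‖M (φ k)‖ * ‖g (φ k) - glim‖ :=
            (M (φ k)).le_opNorm _
        _ ≤ max C 0 * ‖g (φ k) - glim‖ :=
            mul_le_mul_of_nonneg_right (le_max_of_le_left (hC _)) (norm_nonneg _)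
    have hto0 : Tendsto (fun k => max C 0 * ‖g (φ k) - glim‖) atTop (nhds 0) := by
      have : Tendsto (fun k => ‖g (φ k) - glim‖) atTop (nhds 0) := by
        rw [← norm_zero (E := H)]
        exact (continuous_norm.tendsto _).comp (by simpa using hg_tends.sub_const glim)
      simpa using this.const_mul (max C 0)
    rw [← norm_zero (E := H)] at hto0
    exact tendsto_zero_iff_norm_tendsto_zero.mpr
      (squeeze_zero (fun k => norm_nonneg _) hb (by simpa using hto0))
  have hMglim : Tendsto (fun k => M (φ k) glim) atTop (nhds (Mlim glim)) :=
    (hstrong glim).comp hφ.tendsto_atTop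
  have htot : Tendsto (fun k => M (φ k) (g (φ k))) atTop (nhds (Mlim glim)) := by
    have := hdiff.add hMglim
    simpa using this
  have : Mlim glim = y := tendsto_nhds_unique htot hy
  exact ⟨φ, hφ, glim, hnorm, hg_tends, by rw [this, hylim]⟩
end

section
/- Let E_n, E be orthogonal projections on a Hilbert space with E_n → E strongly, E of finite rank m, and let {e_1, …, e_m} be an orthonormal basis of the range of E. Then for all sufficiently large n, the set {E_n e_1, …, E_n e_m} is linearly independent. -/
open Filter

/-- Let `E_n, E` be orthogonal projections on a Hilbert space with `E_n → E` strongly,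
`E` of finite rank `m`, and `{e_1, …, e_m}` an orthonormal basis of the range of `E`.
Then for all sufficiently large `n` the vectors `E_n e_1, …, E_n e_m` are linearly
independent. -/
theorem proj_images_linearIndependent
    {H : Type*} [NormedAddCommGroup H] [InnerProductSpace ℂ H] [CompleteSpace H]
    (E : H →L[ℂ] H) (En : ℕ → H →L[ℂ] H)
    (hE_proj : E ∘L E = E) (hE_sa : IsSelfAdjoint E)
    (hEn_proj : ∀ n, En n ∘L En n = En n) (hEn_sa : ∀ n, IsSelfAdjoint (En n))
    (hstrong : ∀ x : H, Tendsto (fun n => En n x) atTop (nhds (E x)))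
    (m : ℕ)
    (hrank : Module.finrank ℂ (LinearMap.range (E : H →ₗ[ℂ] H)) = m)
    (e : Fin m → H) (he_on : Orthonormal ℂ e)
    (he_fix : ∀ i, E (e i) = e i)
    (he_span : Submodule.span ℂ (Set.range e) = LinearMap.range (E : H →ₗ[ℂ] H)) :
    ∀ᶠ n in atTop, LinearIndependent ℂ (fun i : Fin m => En n (e i)) := by
  have hLI : LinearIndependent ℂ e := he_on.linearIndependent
  have hT : Tendsto (fun n => fun i : Fin m => En n (e i)) atTop (nhds e) := by
    rw [tendsto_pi_nhds]
    intro i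
    simpa [he_fix i] using hstrong (e i)
  exact hT.eventually hLI.eventually
end
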